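/- arXiv:2605.23120 — 8 statements merged into one kernel-verified Lean document; each statement's English description precedes it below -/
import Mathlib

section
/- Let C be an [n,k] linear code over F_q with generator matrix G (a k×n matrix of full row rank whose row space is C), and let M be any n×n matrix over F_q. Define the M-hull of C as Hull_M(C) = C ∩ C^{⊥_M}, where C^{⊥_M} = {y : x M y^T = 0 for all x in C}. Then dim Hull_M(C) = k − rank(G M G^T). -/
open Matrix

/-- The `M`-dual of a code `C ⊆ F^n`: all `y` with `x M yᵀ = 0` for every `x ∈ C`. -/
def Mdual {F : Type*} [Field F] {n : ℕ} (M : Matrix (Fin n) (Fin n) F)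
    (C : Submodule F (Fin n → F)) : Submodule F (Fin n → F) where
  carrier := {y | ∀ x ∈ C, x ⬝ᵥ (M *ᵥ y) = 0}
  add_mem' := by
    intro y z hy hz x hx
    simp [Matrix.mulVec_add, dotProduct_add, hy x hx, hz x hx]
  zero_mem' := by
    intro x hx
    simp
  smul_mem' := by
    intro c y hy x hx
    simp [Matrix.mulVec_smul, dotProduct_smul, hy x hx]

/-! Writing `x = u G`, the hull condition `x M yᵀ = 0` becomes `u (G M yᵀ) = 0` for all `u`,
i.e. `G M yᵀ = 0`. On `y = v G` this reads `(G M Gᵀ) vᵀ = 0`, so the hull is the image of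
`ker (G M Gᵀ)` under the encoding map `v ↦ v G`, which is injective since `G` has full row
rank. Rank–nullity for `G M Gᵀ` finishes the count. -/

namespace Matrix

variable {F : Type*} [Field F] {m n : Type*} [Fintype n]

theorem vecMul_injective_of_rank_eq_card [Fintype m] (G : Matrix m n F)
    (hG : G.rank = Fintype.card m) :
    Function.Injective G.vecMul :=
  vecMul_injective_iff.2 <| linearIndependent_iff_card_eq_finrank_span.2 <| by
    rw [← hG, rank_eq_finrank_span_row, Set.finrank]

theorem finrank_ker_mulVecLin (A : Matrix m n F) :
    Module.finrank F (LinearMap.ker A.mulVecLin) = Fintype.card n - A.rank := by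
  have := LinearMap.finrank_range_add_finrank_ker A.mulVecLin
  rw [Module.finrank_fintype_fun_eq_card] at this
  rw [rank]
  omega

end Matrix

section Hull

variable {F : Type*} [Field F] {m : Type*} [Fintype m] {n : ℕ}

theorem mem_Mdual_range_vecMulLinear_iff (G : Matrix m (Fin n) F) (M : Matrix (Fin n) (Fin n) F)
    (y : Fin n → F) :
    y ∈ Mdual M (LinearMap.range G.vecMulLinear) ↔ G *ᵥ (M *ᵥ y) = 0 := by
  change (∀ x ∈ LinearMap.range G.vecMulLinear, x ⬝ᵥ (M *ᵥ y) = 0) ↔ _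
  simp_rw [LinearMap.mem_range, vecMulLinear_apply, forall_exists_index, forall_apply_eq_imp_iff,
    ← dotProduct_mulVec, dotProduct_comm _ (G *ᵥ (M *ᵥ y)), dotProduct_eq_zero_iff]

theorem range_vecMulLinear_inf_Mdual (G : Matrix m (Fin n) F) (M : Matrix (Fin n) (Fin n) F) :
    LinearMap.range G.vecMulLinear ⊓ Mdual M (LinearMap.range G.vecMulLinear)
      = (LinearMap.ker (G * M * Gᵀ).mulVecLin).map G.vecMulLinear := by
  have hmulVec (v : m → F) : G *ᵥ (M *ᵥ (v ᵥ* G)) = (G * M * Gᵀ) *ᵥ v := by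
    rw [← mulVec_mulVec, ← mulVec_mulVec, mulVec_transpose]
  ext y
  simp only [Submodule.mem_inf, Submodule.mem_map, LinearMap.mem_range, LinearMap.mem_ker,
    mem_Mdual_range_vecMulLinear_iff, mulVecLin_apply, vecMulLinear_apply]
  constructor
  · rintro ⟨⟨v, rfl⟩, hv⟩
    exact ⟨v, hmulVec v ▸ hv, rfl⟩
  · rintro ⟨v, hv, rfl⟩
    exact ⟨⟨v, rfl⟩, (hmulVec v).trans hv⟩

end Hull

theorem finrank_M_hull_general {F : Type*} [Field F] {n k : ℕ}
    (G : Matrix (Fin k) (Fin n) F) (hG : G.rank = k)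
    (C : Submodule F (Fin n → F)) (hC : C = LinearMap.range G.vecMulLinear)
    (M : Matrix (Fin n) (Fin n) F) :
    Module.finrank F ↥(C ⊓ Mdual M C) = k - (G * M * Gᵀ).rank := by
  have hinj : Function.Injective G.vecMulLinear :=
    G.vecMul_injective_of_rank_eq_card (by rw [hG, Fintype.card_fin])
  rw [hC, range_vecMulLinear_inf_Mdual,
    ← (Submodule.equivMapOfInjective _ hinj _).finrank_eq, finrank_ker_mulVecLin,
    Fintype.card_fin]

theorem finrank_M_hull {F : Type*} [Field F] [Fintype F] {n k : ℕ}
    (G : Matrix (Fin k) (Fin n) F) (hG : G.rank = k)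
    (C : Submodule F (Fin n → F)) (hC : C = LinearMap.range G.vecMulLinear)
    (M : Matrix (Fin n) (Fin n) F) :
    Module.finrank F ↥(C ⊓ Mdual M C) = k - (G * M * Gᵀ).rank :=
  finrank_M_hull_general G hG C hC M
end

section
/- Let C be an [n,k] code over F_q with generator matrix G, and let M = aI + bJ with a ≠ 0 be invertible. Then |dim Hull_M(C) − dim Hull(C)| ≤ 1, where Hull(C) = Hull_I(C) is the hull with respect to the standard inner product. -/
/-! Through the injective map `u ↦ u G`, the `M`-hull of `C` is the image of the kernel of the
Gram matrix `G M Gᵀ`, so its dimension is `k - rank (G M Gᵀ)`. For `M = a I + b J` one has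
`G M Gᵀ = a G Gᵀ + b v vᵀ` with `v = G 1ᵀ`: the two Gram matrices differ, up to the unit `a`,
by a matrix of rank at most one, so their ranks differ by at most one. -/

open Matrix

namespace Matrix

variable {K : Type*} [Field K] {m n : Type*} [Fintype n]

theorem rank_add_le (A B : Matrix m n K) : (A + B).rank ≤ A.rank + B.rank := by
  rw [rank, rank, rank, mulVecLin_add]
  exact (Submodule.finrank_mono (LinearMap.range_add_le _ _)).trans
    (Submodule.finrank_add_le_finrank_add_finrank _ _)

theorem rank_neg (A : Matrix m n K) : (-A).rank = A.rank := by
  rw [← neg_one_smul K A]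
  exact rank_smul_of_mem_nonZeroDivisors A
    (mem_nonZeroDivisors_of_ne_zero (neg_ne_zero.2 one_ne_zero))

theorem rank_le_rank_add_rank_sub (A B : Matrix m n K) : A.rank ≤ B.rank + (A - B).rank := by
  simpa using rank_add_le B (A - B)

theorem rank_le_rank_add_one_of_rank_sub_le_one {A B : Matrix m n K} (h : (A - B).rank ≤ 1) :
    A.rank ≤ B.rank + 1 ∧ B.rank ≤ A.rank + 1 := by
  have hBA : (B - A).rank ≤ 1 := by rwa [← neg_sub, rank_neg]
  exact ⟨(rank_le_rank_add_rank_sub A B).trans (by omega),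
    (rank_le_rank_add_rank_sub B A).trans (by omega)⟩

theorem vecMul_injective_of_rank_eq_card_height [Fintype m] {A : Matrix m n K}
    (hA : A.rank = Fintype.card m) : Function.Injective A.vecMul := by
  have hrn := LinearMap.finrank_range_add_finrank_ker Aᵀ.mulVecLin
  rw [← rank, rank_transpose, hA, Module.finrank_fintype_fun_eq_card, add_eq_left,
    Submodule.finrank_eq_zero, LinearMap.ker_eq_bot, mulVecLin_transpose] at hrn
  exact hrn

theorem mul_smul_one_add_smul_allOnes_mul_transpose {R : Type*} [CommRing R] [DecidableEq n]
    (G : Matrix m n R) (a b : R) :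
    G * (a • 1 + b • (of fun _ _ => 1 : Matrix n n R)) * Gᵀ
      = a • (G * Gᵀ) + vecMulVec (b • (G *ᵥ 1)) (G *ᵥ 1) := by
  have hJ : (of fun _ _ => 1 : Matrix n n R) = vecMulVec 1 1 := by
    ext; simp [vecMulVec_apply]
  rw [hJ, Matrix.mul_add, Matrix.add_mul, Matrix.mul_smul, Matrix.smul_mul, Matrix.mul_one,
    Matrix.mul_smul, Matrix.smul_mul, mul_vecMulVec, vecMulVec_mul, vecMul_transpose, smul_vecMulVec]

end Matrix

section Hull

variable {F : Type*} [Field F] {n : ℕ} {ι : Type*} [Fintype ι]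
  (G : Matrix ι (Fin n) F) (M : Matrix (Fin n) (Fin n) F)

theorem vecMul_dotProduct_mulVec_vecMul (w u : ι → F) :
    (w ᵥ* G) ⬝ᵥ (M *ᵥ (u ᵥ* G)) = w ⬝ᵥ ((G * M * Gᵀ) *ᵥ u) := by
  rw [← mulVec_transpose G u, mulVec_mulVec, dotProduct_mulVec, vecMul_vecMul,
    ← dotProduct_mulVec, Matrix.mul_assoc]

theorem range_inf_Mdual_eq_map_ker :
    LinearMap.range G.vecMulLinear ⊓ Mdual M (LinearMap.range G.vecMulLinear)
      = (LinearMap.ker (G * M * Gᵀ).mulVecLin).map G.vecMulLinear := by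
  ext y
  constructor
  · rintro ⟨⟨u, rfl⟩, hy⟩
    refine ⟨u, ?_, rfl⟩
    rw [SetLike.mem_coe, LinearMap.mem_ker, mulVecLin_apply, ← dotProduct_eq_zero_iff]
    intro w
    rw [dotProduct_comm, ← vecMul_dotProduct_mulVec_vecMul]
    exact hy _ ⟨w, rfl⟩
  · rintro ⟨u, hu, rfl⟩
    refine ⟨⟨u, rfl⟩, ?_⟩
    rintro x ⟨w, rfl⟩
    rw [SetLike.mem_coe, LinearMap.mem_ker, mulVecLin_apply] at hu
    simp only [vecMulLinear_apply]
    rw [vecMul_dotProduct_mulVec_vecMul, hu, dotProduct_zero]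

theorem finrank_range_inf_Mdual_add_rank (hG : Function.Injective G.vecMul) :
    Module.finrank F ↥(LinearMap.range G.vecMulLinear ⊓ Mdual M (LinearMap.range G.vecMulLinear))
      + (G * M * Gᵀ).rank = Fintype.card ι := by
  rw [range_inf_Mdual_eq_map_ker,
    (Submodule.equivMapOfInjective G.vecMulLinear hG _).finrank_eq.symm, add_comm, rank,
    LinearMap.finrank_range_add_finrank_ker, Module.finrank_fintype_fun_eq_card]

end Hull

theorem hull_dimension_bound_general {F : Type*} [Field F] {n k : ℕ}
    (G : Matrix (Fin k) (Fin n) F) (hG : G.rank = k)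
    (C : Submodule F (Fin n → F)) (hC : C = LinearMap.range G.vecMulLinear)
    (a b : F) (ha : a ≠ 0) (M : Matrix (Fin n) (Fin n) F)
    (hM : M = a • (1 : Matrix (Fin n) (Fin n) F) + b • (Matrix.of fun _ _ => (1 : F))) :
    Module.finrank F ↥(C ⊓ Mdual M C)
        ≤ Module.finrank F ↥(C ⊓ Mdual 1 C) + 1 ∧
      Module.finrank F ↥(C ⊓ Mdual 1 C)
        ≤ Module.finrank F ↥(C ⊓ Mdual M C) + 1 := by
  subst hC
  have hinj := vecMul_injective_of_rank_eq_card_height (hG.trans (Fintype.card_fin k).symm)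
  have hdimM := finrank_range_inf_Mdual_add_rank G M hinj
  have hdim1 := finrank_range_inf_Mdual_add_rank G 1 hinj
  have hgram : (G * M * Gᵀ - a • (G * Gᵀ)).rank ≤ 1 := by
    rw [hM, mul_smul_one_add_smul_allOnes_mul_transpose, add_sub_cancel_left]
    exact rank_vecMulVec_le _ _
  have hrank := rank_le_rank_add_one_of_rank_sub_le_one hgram
  rw [rank_smul_of_mem_nonZeroDivisors _ (mem_nonZeroDivisors_of_ne_zero ha)] at hrank
  rw [Matrix.mul_one, Fintype.card_fin] at hdim1
  rw [Fintype.card_fin] at hdimM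
  omega

theorem hull_dimension_bound {F : Type*} [Field F] [Fintype F] {n k : ℕ}
    (G : Matrix (Fin k) (Fin n) F) (hG : G.rank = k)
    (C : Submodule F (Fin n → F)) (hC : C = LinearMap.range G.vecMulLinear)
    (a b : F) (ha : a ≠ 0) (M : Matrix (Fin n) (Fin n) F)
    (hM : M = a • (1 : Matrix (Fin n) (Fin n) F) + b • (Matrix.of fun _ _ => (1 : F)))
    (hMinv : IsUnit M.det) :
    Module.finrank F ↥(C ⊓ Mdual M C)
        ≤ Module.finrank F ↥(C ⊓ Mdual 1 C) + 1 ∧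
      Module.finrank F ↥(C ⊓ Mdual 1 C)
        ≤ Module.finrank F ↥(C ⊓ Mdual M C) + 1 :=
  hull_dimension_bound_general G hG C hC a b ha M hM
end

section
/- Let q be odd and n ≥ 3, and let Q₁, Q₂ be nondegenerate quadratic forms on F_q^n (given by symmetric invertible matrices M₁, M₂ via Q_i(x) = x M_i x^T) with the same zero set: {x : Q₁(x) = 0} = {x : Q₂(x) = 0}. Then there exists λ ∈ F_q* with M₂ = λ M₁. -/
/-!
By polarization it suffices to show `Q₂ = c • Q₁` for the quadratic forms `Qᵢ v = Bᵢ v v`.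
Chevalley–Warning (`n ≥ 3`) provides a nonzero common isotropic vector `x`. For every `y`, the line
`x + t y` meets the common zero set a second time at `t = -2 B₁(x, y) / Q₁(y)`; comparing the two
forms there gives `B₁(x, y) Q₂(y) = B₂(x, y) Q₁(y)`, and shows that the functionals `B₁(x, ·)` and
`B₂(x, ·)` have the same kernel, hence `B₂(x, ·) = c B₁(x, ·)`. So `Q₂ = c Q₁` off the hyperplane
`B₁(x, ·) = 0`, and on it by the parallelogram law.
-/

open Matrix

namespace LinearMap.BilinForm

variable {F V : Type*} [Field F] [AddCommGroup V] [Module F V]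
  {B B₁ B₂ : LinearMap.BilinForm F V}

lemma IsSymm.apply_smul_add_smul_self (hB : B.IsSymm) (a b : F) (x y : V) :
    B (a • x + b • y) (a • x + b • y) = a ^ 2 * B x x + 2 * a * b * B x y + b ^ 2 * B y y := by
  simp only [map_add, map_smul, LinearMap.add_apply, LinearMap.smul_apply, smul_eq_mul, hB.eq y x]
  ring

variable [NeZero (2 : F)]

/-- The line through `x` in direction `y` meets the zero set of `B₁` a second time at
`B₁ y y • x - 2 B₁ x y • y`; that point must be isotropic for `B₂` as well. -/
lemma apply_mul_apply_self_eq_of_isotropic (hB₁ : B₁.IsSymm) (hB₂ : B₂.IsSymm)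
    (hiso : ∀ v, B₁ v v = 0 → B₂ v v = 0) {x y : V} (hx : B₁ x x = 0) (hxy : B₁ x y ≠ 0) :
    B₁ x y * B₂ y y = B₂ x y * B₁ y y := by
  have h₂ := hiso (B₁ y y • x + (-2 * B₁ x y) • y) (by
    rw [hB₁.apply_smul_add_smul_self, hx]; ring)
  rw [hB₂.apply_smul_add_smul_self, hiso x hx] at h₂
  have h₂' : (2 : F) ^ 2 * B₁ x y * (B₁ x y * B₂ y y - B₂ x y * B₁ y y) = 0 := by
    linear_combination h₂
  exact sub_eq_zero.1 <|
    (mul_eq_zero.1 h₂').resolve_left (mul_ne_zero (pow_ne_zero 2 two_ne_zero) hxy)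

lemma apply_eq_zero_of_isotropic (hB₁ : B₁.IsSymm) (hB₂ : B₂.IsSymm)
    (hiso : ∀ v, B₁ v v = 0 ↔ B₂ v v = 0) {x y : V} (hx : B₁ x x = 0) (hxy : B₁ x y = 0) :
    B₂ x y = 0 := by
  -- otherwise `y` is isotropic, and then `x + y` is isotropic for `B₁` but not for `B₂`
  by_contra h
  have hy : B₁ y y = 0 := by
    have := apply_mul_apply_self_eq_of_isotropic hB₂ hB₁ (fun v => (hiso v).2)
      ((hiso x).1 hx) h
    rw [hxy, zero_mul] at this
    exact (mul_eq_zero.1 this).resolve_left h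
  have hsum := (hiso ((1 : F) • x + (1 : F) • y)).1 (by
    rw [hB₁.apply_smul_add_smul_self, hx, hxy, hy]; ring)
  rw [hB₂.apply_smul_add_smul_self, (hiso x).1 hx, (hiso y).1 hy] at hsum
  exact h <| (mul_eq_zero.1 (by linear_combination hsum : (2 : F) * B₂ x y = 0)).resolve_left
    two_ne_zero

theorem exists_eq_smul_of_isotropic_iff (hB₁ : B₁.IsSymm) (hB₂ : B₂.IsSymm)
    (hsep₁ : B₁.SeparatingLeft) (hsep₂ : B₂.SeparatingLeft)
    (hiso : ∀ v, B₁ v v = 0 ↔ B₂ v v = 0) {x : V} (hx0 : x ≠ 0) (hx : B₁ x x = 0) :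
    ∃ c : F, c ≠ 0 ∧ B₂ = c • B₁ := by
  obtain ⟨c, hc⟩ : ∃ c : F, c • B₁ x = B₂ x := by
    have : B₂ x ∈ Submodule.span F (Set.range fun _ : Unit => B₁ x) :=
      mem_span_of_iInf_ker_le_ker fun y hy =>
        apply_eq_zero_of_isotropic hB₁ hB₂ hiso hx (by simpa using hy)
    simpa [Set.range_const, Submodule.mem_span_singleton] using this
  obtain ⟨z, hz⟩ : ∃ z, B₁ x z ≠ 0 := by
    by_contra! h
    exact hx0 (hsep₁ x h)
  have hdiag : ∀ y, B₁ x y ≠ 0 → B₂ y y = c * B₁ y y := fun y hy => by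
    have := apply_mul_apply_self_eq_of_isotropic hB₁ hB₂ (fun v => (hiso v).1) hx hy
    rw [← hc, LinearMap.smul_apply, smul_eq_mul] at this
    exact mul_left_cancel₀ hy (by linear_combination this)
  have hB₂c : B₂ = c • B₁ := by
    refine ext_of_isSymm hB₂ (hB₁.smul c) fun y => ?_
    rw [LinearMap.smul_apply, LinearMap.smul_apply, smul_eq_mul]
    by_cases hy : B₁ x y = 0
    -- `y ± z` lie off the hyperplane `B₁ x · = 0`, and the parallelogram law recovers `y`
    · have hne : ∀ s : F, s ≠ 0 → B₁ x ((1 : F) • y + s • z) ≠ 0 := fun s hs => by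
        simpa [hy] using mul_ne_zero hs hz
      have hp := hdiag _ (hne 1 one_ne_zero)
      have hm := hdiag _ (hne (-1) (neg_ne_zero.2 one_ne_zero))
      rw [hB₁.apply_smul_add_smul_self, hB₂.apply_smul_add_smul_self] at hp hm
      refine mul_left_cancel₀ (two_ne_zero (α := F)) ?_
      linear_combination hp + hm - 2 * hdiag z hz
    · exact hdiag y hy
  refine ⟨c, fun hc0 => hx0 (hsep₂ x fun y => ?_), hB₂c⟩
  rw [hB₂c, hc0, zero_smul, LinearMap.zero_apply, LinearMap.zero_apply]

end LinearMap.BilinForm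

open MvPolynomial

theorem Matrix.exists_ne_zero_toBilin'_self_eq_zero {F ι : Type*} [Field F] [Fintype F]
    [Fintype ι] [DecidableEq ι] (hι : 2 < Fintype.card ι) (M : Matrix ι ι F) :
    ∃ x, x ≠ 0 ∧ M.toBilin' x x = 0 := by
  classical
  let f : MvPolynomial ι F := ∑ i, ∑ j, X i * C (M i j) * X j
  have hf : ∀ x, eval x f = M.toBilin' x x := fun x => by simp [f, toBilin'_apply]
  have hdeg : f.totalDegree < Fintype.card ι :=
    lt_of_le_of_lt (IsHomogeneous.totalDegree_le <| IsHomogeneous.sum _ _ 2 fun i _ =>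
      IsHomogeneous.sum _ _ 2 fun j _ =>
        ((isHomogeneous_X F i).mul (isHomogeneous_C _ _)).mul (isHomogeneous_X F j)) hι
  have hdvd := char_dvd_card_solutions (ringChar F) hdeg
  let zero : { x : ι → F // eval x f = 0 } := ⟨0, by rw [hf]; simp⟩
  have : Nontrivial { x : ι → F // eval x f = 0 } := by
    rw [← Fintype.one_lt_card_iff_nontrivial]
    have := (CharP.char_is_prime F (ringChar F)).two_le
    have := Nat.le_of_dvd (Fintype.card_pos_iff.2 ⟨zero⟩) hdvd
    omega
  obtain ⟨⟨x, hx⟩, hne⟩ := exists_ne zero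
  exact ⟨x, fun h => hne (Subtype.ext h), by rwa [← hf]⟩

theorem quadratic_forms_same_zero_set_proportional {F : Type*} [Field F] [Fintype F] {n : ℕ}
    (hq : Odd (Fintype.card F)) (hn : 3 ≤ n)
    (M₁ M₂ : Matrix (Fin n) (Fin n) F)
    (hM₁s : M₁ᵀ = M₁) (hM₂s : M₂ᵀ = M₂)
    (hM₁ : IsUnit M₁.det) (hM₂ : IsUnit M₂.det)
    (hzero : {x : Fin n → F | x ⬝ᵥ (M₁ *ᵥ x) = 0} = {x : Fin n → F | x ⬝ᵥ (M₂ *ᵥ x) = 0}) :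
    ∃ lam : F, lam ≠ 0 ∧ M₂ = lam • M₁ := by
  have : NeZero (2 : F) := ⟨Ring.two_ne_zero fun h => by
    have := FiniteField.even_card_of_char_two h
    rw [Nat.odd_iff] at hq
    omega⟩
  have hiso : ∀ v, M₁.toBilin' v v = 0 ↔ M₂.toBilin' v v = 0 := by
    simpa [Set.ext_iff, toBilin'_apply'] using hzero
  obtain ⟨x, hx0, hx⟩ := M₁.exists_ne_zero_toBilin'_self_eq_zero (by rw [Fintype.card_fin]; omega)
  obtain ⟨c, hc0, hc⟩ := LinearMap.BilinForm.exists_eq_smul_of_isotropic_iff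
    (isSymm_toBilin'_iff_isSymm.2 hM₁s) (isSymm_toBilin'_iff_isSymm.2 hM₂s)
    (LinearMap.BilinForm.nondegenerate_toBilin'_iff_det_ne_zero.2 hM₁.ne_zero).1
    (LinearMap.BilinForm.nondegenerate_toBilin'_iff_det_ne_zero.2 hM₂.ne_zero).1 hiso hx0 hx
  exact ⟨c, hc0, toBilin'.injective (by rw [hc, map_smul])⟩
end

section
/- Let q be odd with characteristic p, and suppose p divides n with n ≥ 2. Then the number of vectors x ∈ F_q^n with Σ x_i² = 0 and Σ x_i ≠ 0 equals q^{n-2}(q−1). -/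
theorem count_isotropic_nonzero_sum_char_dvd {F : Type*} [Field F] [Fintype F] {q n : ℕ}
    (hcard : Fintype.card F = q) (hq : Odd q)
    (hn : 2 ≤ n) (hp : ringChar F ∣ n) :
    Set.ncard {x : Fin n → F | (∑ i, x i ^ 2) = 0 ∧ (∑ i, x i) ≠ 0}
      = q ^ (n - 2) * (q - 1) := by
  classical
  haveI := ringChar.charP F
  have hn0 : (n : F) = 0 := (CharP.cast_eq_zero_iff F (ringChar F) n).mpr hp
  have hqpos : 0 < q := hcard ▸ Fintype.card_pos
  have h2 : (2 : F) ≠ 0 := by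
    refine Ring.two_ne_zero ?_
    intro h
    have := FiniteField.even_card_of_char_two h
    rw [hcard, Nat.odd_iff.mp hq] at this
    exact one_ne_zero this
  -- basic sum computations
  have hsum : ∀ (x : Fin n → F) (t : F), ∑ i, (x i + t) = ∑ i, x i := by
    intro x t
    rw [Finset.sum_add_distrib, Finset.sum_const, Finset.card_univ, Fintype.card_fin,
      nsmul_eq_mul, hn0, zero_mul, add_zero]
  have hQ : ∀ (x : Fin n → F) (t : F),
      ∑ i, (x i + t) ^ 2 = (∑ i, x i ^ 2) + 2 * t * ∑ i, x i := by
    intro x t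
    have h1 : ∀ i : Fin n, (x i + t) ^ 2 = (x i ^ 2 + t ^ 2) + 2 * t * x i := fun i => by ring
    calc ∑ i, (x i + t) ^ 2 = ∑ i, ((x i ^ 2 + t ^ 2) + 2 * t * x i) := by
          exact Finset.sum_congr rfl fun i _ => h1 i
      _ = ((∑ i, x i ^ 2) + ∑ _i : Fin n, t ^ 2) + 2 * t * ∑ i, x i := by
          rw [Finset.sum_add_distrib, Finset.sum_add_distrib, Finset.mul_sum]
      _ = (∑ i, x i ^ 2) + 2 * t * ∑ i, x i := by
          rw [Finset.sum_const, Finset.card_univ, Fintype.card_fin, nsmul_eq_mul, hn0,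
            zero_mul, add_zero]
  -- the main bijection: adding a constant preserves the sum and shifts Q by 2 t s
  let S : Set (Fin n → F) := {x : Fin n → F | (∑ i, x i ^ 2) = 0 ∧ (∑ i, x i) ≠ 0}
  let T : Set (Fin n → F) := {x : Fin n → F | (∑ i, x i) ≠ 0}
  have e1 : (S × F) ≃ T := by
    refine
      { toFun := fun p => ⟨fun i => p.1.1 i + p.2, ?_⟩
        invFun := fun y =>
          (⟨fun i => y.1 i + -((∑ i, y.1 i ^ 2) / (2 * ∑ i, y.1 i)), ?_⟩,
            (∑ i, y.1 i ^ 2) / (2 * ∑ i, y.1 i))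
        left_inv := ?_
        right_inv := ?_ }
    · show (∑ i, (p.1.1 i + p.2)) ≠ 0
      rw [hsum]
      exact p.1.2.2
    · have hs : (∑ i, y.1 i) ≠ 0 := y.2
      have h2s : (2 : F) * ∑ i, y.1 i ≠ 0 := mul_ne_zero h2 hs
      constructor
      · show (∑ i, (y.1 i + -((∑ i, y.1 i ^ 2) / (2 * ∑ i, y.1 i))) ^ 2) = 0
        rw [hQ]
        field_simp
        ring
      · show (∑ i, (y.1 i + -((∑ i, y.1 i ^ 2) / (2 * ∑ i, y.1 i)))) ≠ 0
        rw [hsum]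
        exact hs
    · rintro ⟨⟨x, hx1, hx2⟩, t⟩
      have hQy : (∑ i, (x i + t) ^ 2) = 2 * t * ∑ i, x i := by rw [hQ, hx1, zero_add]
      have hsy : (∑ i, (x i + t)) = ∑ i, x i := hsum x t
      have ht : (∑ i, (x i + t) ^ 2) / (2 * ∑ i, (x i + t)) = t := by
        rw [hQy, hsy, mul_comm (2 : F) t, mul_assoc]
        exact mul_div_cancel_right₀ t (mul_ne_zero h2 hx2)
      refine Prod.ext ?_ ht
      exact Subtype.ext (funext fun i => by simp only [ht]; ring)
    · rintro ⟨y, hy⟩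
      exact Subtype.ext (funext fun i => by ring)
  -- counting the hyperplane {s = 0}
  haveI : NeZero n := ⟨by omega⟩
  let e₀ : Fin n → F := Pi.single (0 : Fin n) 1
  have he₀ : (∑ i, e₀ i) = 1 := by
    rw [show (∑ i, e₀ i) = ∑ i, Pi.single (0 : Fin n) (1 : F) i from rfl,
      Finset.sum_pi_single', if_pos (Finset.mem_univ _)]
  have hsum0 : ∀ (x : Fin n → F) (c : F), (∑ i, (x i + c * e₀ i)) = (∑ i, x i) + c := by
    intro x c
    rw [Finset.sum_add_distrib, ← Finset.mul_sum, he₀, mul_one]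
  let H : Set (Fin n → F) := {x : Fin n → F | (∑ i, x i) = 0}
  have e2 : (Fin n → F) ≃ H × F := by
    refine
      { toFun := fun x => (⟨fun i => x i + -(∑ j, x j) * e₀ i, ?_⟩, ∑ j, x j)
        invFun := fun p => fun i => p.1.1 i + p.2 * e₀ i
        left_inv := ?_
        right_inv := ?_ }
    · show (∑ i, (x i + -(∑ j, x j) * e₀ i)) = 0
      rw [hsum0]; ring
    · intro x
      funext i
      simp only
      ring
    · rintro ⟨⟨y, hy⟩, c⟩
      have hsy : (∑ j, (y j + c * e₀ j)) = c := by
        rw [hsum0, hy, zero_add]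
      refine Prod.ext (Subtype.ext (funext fun i => ?_)) hsy
      simp only [hsy]
      ring
  -- now count
  have hFq : Nat.card F = q := by rw [Nat.card_eq_fintype_card, hcard]
  have hFn : Nat.card (Fin n → F) = q ^ n := by
    rw [Nat.card_eq_fintype_card, Fintype.card_fun, hcard, Fintype.card_fin]
  have hH : H.ncard * q = q ^ n := by
    have := Nat.card_congr e2
    rw [hFn, Nat.card_prod, hFq, Nat.card_coe_set_eq] at this
    exact this.symm
  have hHval : H.ncard = q ^ (n - 1) := by
    have : q ^ (n - 1) * q = q ^ n := by
      rw [← pow_succ]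
      congr 1
      omega
    exact Nat.eq_of_mul_eq_mul_right hqpos (by rw [hH, ← this])
  have hcompl : H.ncard + T.ncard = q ^ n := by
    have hc : Hᶜ = T := by
      ext x
      simp [H, T, Set.mem_compl_iff]
    have := Set.ncard_add_ncard_compl H (Set.toFinite _) (Set.toFinite _)
    rwa [hc, hFn] at this
  have hT : T.ncard = q ^ (n - 1) * (q - 1) := by
    have h1 : T.ncard = q ^ n - q ^ (n - 1) := by omega
    rw [h1, Nat.mul_sub, mul_one]
    congr 1
    rw [← pow_succ]
    congr 1
    omega
  have hS : S.ncard * q = T.ncard := by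
    have := Nat.card_congr e1
    rwa [Nat.card_prod, hFq, Nat.card_coe_set_eq, Nat.card_coe_set_eq] at this
  have key : S.ncard * q = (q ^ (n - 2) * (q - 1)) * q := by
    rw [hS, hT]
    have : q ^ (n - 1) = q ^ (n - 2) * q := by
      rw [← pow_succ]
      congr 1
      omega
    rw [this]
    ring
  exact Nat.eq_of_mul_eq_mul_right hqpos key
end

section
/- Let q be odd, n even, and suppose the characteristic of F_q does not divide n. Then the number of vectors x ∈ F_q^n with Σ x_i² = 0 and Σ x_i ≠ 0 equals q^{n-2}(q−1) + χ((−1)^{n/2})(q−1)q^{(n−2)/2}, where χ is the quadratic character of F_q extended by χ(0)=0. -/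
/-!
Write `N(t)` for the number of `x ∈ F^n` with `∑ xᵢ² = t` and `u(t)` for the number of those that
moreover satisfy `∑ xᵢ = 0`, so that the count in question is `N(0) - u(0)`. Fibre counts of sums
multiply under addConv, so `N_{m+2} = N_m * N_2`; together with the Jacobi sum
`χ * χ = χ(-1) (q δ₀ - 1)` this gives `N(t) = q^{n-1} + χ(-1)^{n/2} q^{(n-2)/2} (q δ₀(t) - 1)`.
Since `n` is invertible in `F`, translating by the constant vector `s/n` turns solutions with
`∑ xᵢ = s` into solutions with `∑ xᵢ = 0`, whence `N = q^{n-1} + χ(n) (χ * u)`. Convolving both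
descriptions of `N` with `χ` and evaluating at `0` gives `χ(n) χ(-1) (q u(0) - q^{n-1}) = 0`,
i.e. `u(0) = q^{n-2}`.
-/

/-- The quadratic character of a finite field, with values in `ℤ` and `χ(0) = 0`. -/
def quadChar (F : Type*) [Field F] [Fintype F] [DecidableEq F] (a : F) : ℤ :=
  if a = 0 then 0 else if IsSquare a then 1 else -1

open Finset

section Convolution

variable {G R : Type*} [AddCommGroup G] [Fintype G] [CommRing R]

def addConv (f g : G → R) (t : G) : R := ∑ a, f a * g (t - a)

lemma addConv_comm (f g : G → R) : addConv f g = addConv g f := by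
  ext t
  exact Fintype.sum_equiv (Equiv.subLeft t) _ _ fun a => by simp [mul_comm]

lemma addConv_assoc (f g h : G → R) : addConv (addConv f g) h = addConv f (addConv g h) := by
  ext t
  simp only [addConv, sum_mul, mul_sum]
  rw [sum_comm]
  refine Fintype.sum_congr _ _ fun b => ?_
  refine Fintype.sum_equiv (Equiv.subRight b) _ _ fun a => ?_
  simp only [Equiv.subRight_apply, sub_sub, add_sub_cancel, mul_assoc]

lemma addConv_const_right (f : G → R) (c : R) (t : G) :
    addConv f (fun _ => c) t = (∑ a, f a) * c := by
  simp only [addConv, sum_mul]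

lemma addConv_add_mul_right (f g : G → R) (c d : R) (t : G) :
    addConv f (fun x => c + d * g x) t = (∑ a, f a) * c + d * addConv f g t := by
  simp only [addConv, mul_add, sum_add_distrib, sum_mul, mul_sum, mul_left_comm]

lemma addConv_mul_left (f g : G → R) (d : R) (t : G) :
    addConv (fun x => d * f x) g t = d * addConv f g t := by
  simp only [addConv, mul_sum, mul_assoc]

variable [DecidableEq G]

def centeredDelta (t : G) : R := if t = 0 then (Fintype.card G : R) - 1 else -1

lemma centeredDelta_eq (t : G) :
    (centeredDelta t : R) = Fintype.card G * (if t = 0 then 1 else 0) - 1 := by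
  unfold centeredDelta
  split_ifs <;> ring

lemma sum_const_add_mul_centeredDelta (c d : R) :
    ∑ t : G, (c + d * centeredDelta t) = Fintype.card G * c := by
  simp only [centeredDelta_eq, mul_sub, mul_ite, mul_one, mul_zero, sum_add_distrib,
    sum_sub_distrib, sum_ite_eq', mem_univ, if_true, sum_const, card_univ, nsmul_eq_mul]
  ring

lemma addConv_centeredDelta (f : G → R) (t : G) :
    addConv f centeredDelta t = Fintype.card G * f t - ∑ a, f a := by
  simp only [addConv, centeredDelta_eq, mul_sub, mul_ite, mul_one, mul_zero, sub_eq_zero,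
    sum_sub_distrib, @eq_comm _ t, sum_ite_eq', mem_univ, if_true]
  ring

lemma addConv_const_add_mul_centeredDelta (c d c' d' : R) :
    addConv (fun t : G => c + d * centeredDelta t) (fun t => c' + d' * centeredDelta t) =
      fun t => Fintype.card G * (c * c' + d * d' * centeredDelta t) := by
  ext t
  rw [addConv_add_mul_right, addConv_centeredDelta, sum_const_add_mul_centeredDelta]
  ring

end Convolution

section FiberCard

variable {α β γ δ : Type*} [Fintype α] [Fintype β] [DecidableEq γ] [DecidableEq δ]

def fiberCard (φ : α → γ) (t : γ) : ℤ := #{x | φ x = t}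

lemma fiberCard_eq_sum_ite (φ : α → γ) (t : γ) :
    fiberCard φ t = ∑ x, if φ x = t then 1 else 0 := by
  rw [fiberCard, card_filter]
  push_cast
  rfl

lemma fiberCard_comp_equiv (φ : α → γ) (e : β ≃ α) : fiberCard (φ ∘ e) = fiberCard φ := by
  ext t
  simp only [fiberCard_eq_sum_ite]
  exact Fintype.sum_equiv e _ _ fun _ => rfl

lemma fiberCard_id [Fintype γ] (t : γ) : fiberCard (id : γ → γ) t = 1 := by
  simp [fiberCard_eq_sum_ite]

lemma sum_fiberCard [Fintype γ] (φ : α → γ) : ∑ t, fiberCard φ t = Fintype.card α := by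
  simp only [fiberCard_eq_sum_ite]
  rw [sum_comm]
  simp

lemma sum_comp_eq_sum_fiberCard_mul [Fintype γ] (φ : α → γ) (g : γ → ℤ) :
    ∑ x, g (φ x) = ∑ t, fiberCard φ t * g t := by
  simp only [fiberCard_eq_sum_ite, sum_mul, ite_mul, one_mul, zero_mul]
  rw [sum_comm]
  simp

lemma sum_fiberCard_prod_left [Fintype γ] (φ : α → γ) (ψ : α → δ) (t : δ) :
    ∑ s, fiberCard (fun x => (φ x, ψ x)) (s, t) = fiberCard ψ t := by
  simp only [fiberCard_eq_sum_ite, Prod.mk.injEq, ite_and]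
  rw [sum_comm]
  simp

lemma sum_fiberCard_prod_right [Fintype δ] (φ : α → γ) (ψ : α → δ) (s : γ) :
    ∑ t, fiberCard (fun x => (φ x, ψ x)) (s, t) = fiberCard φ s := by
  simp only [fiberCard_eq_sum_ite, Prod.mk.injEq, ite_and]
  rw [sum_comm]
  simp

lemma card_filter_eq_and_ne (φ : α → γ) (ψ : α → δ) (s : γ) (t : δ) :
    (#{x | ψ x = t ∧ φ x ≠ s} : ℤ) =
      fiberCard ψ t - fiberCard (fun x => (φ x, ψ x)) (s, t) := by
  rw [card_filter, fiberCard_eq_sum_ite, fiberCard_eq_sum_ite]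
  push_cast
  rw [← sum_sub_distrib]
  refine Fintype.sum_congr _ _ fun x => ?_
  by_cases hψ : ψ x = t <;> by_cases hφ : φ x = s <;> simp [hψ, hφ]

lemma fiberCard_add {G : Type*} [AddCommGroup G] [Fintype G] [DecidableEq G]
    (φ : α → G) (ψ : β → G) :
    fiberCard (fun p : α × β => φ p.1 + ψ p.2) = addConv (fiberCard φ) (fiberCard ψ) := by
  ext t
  simp only [addConv, fiberCard_eq_sum_ite, sum_mul_sum, ite_mul, one_mul, zero_mul, ← ite_and]
  rw [sum_comm, Fintype.sum_prod_type]
  refine Fintype.sum_congr _ _ fun x => ?_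
  conv_rhs => rw [sum_comm]
  refine Fintype.sum_congr _ _ fun y => ?_
  simp only [ite_and, sum_ite_eq, mem_univ, if_true, eq_sub_iff_add_eq']

end FiberCard

section SumFin

variable {α G : Type*} [Fintype α] [DecidableEq G]

lemma fiberCard_sum_fin_one [AddCommMonoid G] (φ : α → G) :
    fiberCard (fun x : Fin 1 → α => ∑ i, φ (x i)) = fiberCard φ := by
  rw [← fiberCard_comp_equiv _ (Equiv.funUnique (Fin 1) α).symm]
  congr 1
  ext a
  simp

variable [AddCommGroup G] [Fintype G]

lemma fiberCard_sum_fin_add (φ : α → G) (m k : ℕ) :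
    fiberCard (fun x : Fin (m + k) → α => ∑ i, φ (x i)) =
      addConv (fiberCard fun x : Fin m → α => ∑ i, φ (x i))
        (fiberCard fun x : Fin k → α => ∑ i, φ (x i)) := by
  rw [← fiberCard_add, ← fiberCard_comp_equiv _ (Fin.appendEquiv m k)]
  congr 1
  ext p
  simp [Fin.sum_univ_add]

lemma fiberCard_sum_eq_card_pow (m : ℕ) (s : G) :
    fiberCard (fun x : Fin (m + 1) → G => ∑ i, x i) s = (Fintype.card G : ℤ) ^ m := by
  have hsplit := congrFun (fiberCard_sum_fin_add (id : G → G) m 1) s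
  rw [fiberCard_sum_fin_one, show fiberCard (id : G → G) = fun _ => 1 from funext fiberCard_id,
    addConv_const_right, sum_fiberCard] at hsplit
  simpa using hsplit

end SumFin

section FiniteField

variable {F : Type*} [Field F] [Fintype F] [DecidableEq F]

local notation "χ" => quadraticChar F

lemma quadChar_eq_quadraticChar (a : F) : quadChar F a = χ a := by
  rw [quadraticChar_apply, quadraticCharFun, quadChar]

lemma fiberCard_sq (hF : ringChar F ≠ 2) (a : F) :
    fiberCard (fun x : F => x ^ 2) a = 1 + χ a := by
  rw [fiberCard, ← Set.toFinset_ofPred, quadraticChar_card_sqrts hF, add_comm]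

lemma quadraticChar_mul_quadraticChar_neg (a : F) :
    χ a * χ (-a) = χ (-1) * (1 - if a = 0 then 1 else 0) := by
  by_cases ha : a = 0
  · simp [ha]
  · rw [if_neg ha, neg_eq_neg_one_mul a, map_mul, mul_left_comm, ← sq, ← map_pow,
      quadraticChar_sq_one' ha]
    ring

lemma jacobiSum_quadraticChar_self (hF : ringChar F ≠ 2) : jacobiSum χ χ = -χ (-1) := by
  conv_lhs => arg 2; rw [← (quadraticChar_isQuadratic F).inv]
  exact jacobiSum_nontrivial_inv (quadraticChar_ne_one hF)

lemma addConv_quadraticChar_self (hF : ringChar F ≠ 2) :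
    addConv χ χ = fun t => χ (-1) * centeredDelta t := by
  ext t
  by_cases ht : t = 0
  · subst ht
    simp only [addConv, zero_sub, quadraticChar_mul_quadraticChar_neg, ← mul_sum, sum_sub_distrib,
      sum_ite_eq', mem_univ, if_true, sum_const, card_univ, nsmul_eq_mul, mul_one, centeredDelta]
  · have hχt : χ t * χ t = 1 := by rw [← map_mul, ← sq, quadraticChar_sq_one' ht]
    calc addConv χ χ t = ∑ b, χ (t * b) * χ (t - t * b) :=
          (Fintype.sum_equiv (Equiv.mulLeft₀ t ht) _ _ fun b => rfl).symm
      _ = ∑ b, χ b * χ (1 - b) := by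
          refine Fintype.sum_congr _ _ fun b => ?_
          rw [← mul_one_sub, map_mul, map_mul, mul_mul_mul_comm, hχt, one_mul]
      _ = χ (-1) * centeredDelta t := by
          rw [← jacobiSum, jacobiSum_quadraticChar_self hF, centeredDelta, if_neg ht]
          ring

lemma fiberCard_sumSq_two (hF : ringChar F ≠ 2) (t : F) :
    fiberCard (fun x : Fin 2 → F => ∑ i, x i ^ 2) t =
      Fintype.card F + χ (-1) * centeredDelta t := by
  have h1 : fiberCard (fun x : Fin 1 → F => ∑ i, x i ^ 2) = fun a => 1 + 1 * χ a := by
    ext a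
    rw [fiberCard_sum_fin_one (fun x : F => x ^ 2), fiberCard_sq hF, one_mul]
  have hsum : ∑ a : F, (1 + 1 * χ a) = Fintype.card F := by
    rw [sum_add_distrib, ← mul_sum, quadraticChar_sum_zero hF]
    simp
  rw [fiberCard_sum_fin_add (fun x : F => x ^ 2) 1 1, h1, addConv_add_mul_right, hsum, addConv_comm,
    addConv_add_mul_right, addConv_quadraticChar_self hF, quadraticChar_sum_zero hF]
  ring

lemma fiberCard_sumSq_even (hF : ringChar F ≠ 2) (k : ℕ) (t : F) :
    fiberCard (fun x : Fin (2 * k + 2) → F => ∑ i, x i ^ 2) t =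
      (Fintype.card F : ℤ) ^ (2 * k + 1) +
        χ (-1) ^ (k + 1) * Fintype.card F ^ k * centeredDelta t := by
  induction k generalizing t with
  | zero => simpa using fiberCard_sumSq_two hF t
  | succ k ih =>
    rw [show 2 * (k + 1) + 2 = (2 * k + 2) + 2 by ring, fiberCard_sum_fin_add (fun x : F => x ^ 2),
      funext ih, funext (fiberCard_sumSq_two hF), addConv_const_add_mul_centeredDelta]
    ring

lemma fiberCard_sum_sumSq_translate {n : ℕ} (hn : (n : F) ≠ 0) (s t : F) :
    fiberCard (fun x : Fin n → F => (∑ i, x i, ∑ i, x i ^ 2)) (s, t) =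
      fiberCard (fun x : Fin n → F => (∑ i, x i, ∑ i, x i ^ 2)) (0, t - s ^ 2 / n) := by
  conv_lhs => rw [← fiberCard_comp_equiv _ (Equiv.addRight fun _ => s / n)]
  simp only [fiberCard]
  congr 2
  apply filter_congr
  intro x _
  have hL : ∑ i, (x i + s / n) = ∑ i, x i + s := by
    rw [sum_add_distrib, sum_const, card_univ, Fintype.card_fin, nsmul_eq_mul]
    field_simp
  have hQ : ∑ i, (x i + s / n) ^ 2 = ∑ i, x i ^ 2 + 2 * (s / n) * ∑ i, x i + s ^ 2 / n := by
    simp only [add_sq, sum_add_distrib, ← sum_mul, ← mul_sum, sum_const, card_univ,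
      Fintype.card_fin, nsmul_eq_mul]
    field_simp
  simp only [Function.comp_apply, Equiv.coe_addRight, Pi.add_apply, hL, hQ, Prod.mk.injEq,
    add_eq_right]
  constructor
  · rintro ⟨hL0, hQt⟩
    exact ⟨hL0, by rw [← hQt, hL0]; ring⟩
  · rintro ⟨hL0, hQt⟩
    exact ⟨hL0, by rw [hQt, hL0]; ring⟩

lemma fiberCard_sq_div (hF : ringChar F ≠ 2) {c : F} (hc : c ≠ 0) (a : F) :
    fiberCard (fun s : F => s ^ 2 / c) a = 1 + χ c * χ a := by
  rw [← map_mul, ← fiberCard_sq hF]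
  simp only [fiberCard, div_eq_iff hc, mul_comm a]

lemma sum_fiberCard_sum_sumSq_zero (m : ℕ) :
    ∑ b, fiberCard (fun x : Fin (m + 1) → F => (∑ i, x i, ∑ i, x i ^ 2)) (0, b) =
      Fintype.card F ^ m := by
  rw [sum_fiberCard_prod_right (fun x : Fin (m + 1) → F => ∑ i, x i), fiberCard_sum_eq_card_pow]

lemma fiberCard_sumSq_eq_addConv (hF : ringChar F ≠ 2) {m : ℕ}
    (hn : ((m + 1 : ℕ) : F) ≠ 0) (t : F) :
    fiberCard (fun x : Fin (m + 1) → F => ∑ i, x i ^ 2) t =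
      Fintype.card F ^ m + χ (m + 1 : ℕ) * addConv χ
        (fun b => fiberCard (fun x : Fin (m + 1) → F => (∑ i, x i, ∑ i, x i ^ 2)) (0, b)) t := by
  set u := fun b => fiberCard (fun x : Fin (m + 1) → F => (∑ i, x i, ∑ i, x i ^ 2)) (0, b)
  calc fiberCard (fun x : Fin (m + 1) → F => ∑ i, x i ^ 2) t
      = ∑ s, u (t - s ^ 2 / (m + 1 : ℕ)) := by
        rw [← sum_fiberCard_prod_left (fun x : Fin (m + 1) → F => ∑ i, x i)]
        exact Fintype.sum_congr _ _ fun s => fiberCard_sum_sumSq_translate hn s t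
    _ = addConv (fun a => 1 + χ (m + 1 : ℕ) * χ a) u t := by
        rw [sum_comp_eq_sum_fiberCard_mul (fun s : F => s ^ 2 / (m + 1 : ℕ)) (fun a => u (t - a))]
        simp only [addConv, fiberCard_sq_div hF hn]
    _ = _ := by
        rw [addConv_comm, addConv_add_mul_right, sum_fiberCard_sum_sumSq_zero, addConv_comm,
          mul_one]

lemma fiberCard_sum_sumSq_zero_zero (hF : ringChar F ≠ 2) (k : ℕ)
    (hn : ((2 * k + 2 : ℕ) : F) ≠ 0) :
    fiberCard (fun x : Fin (2 * k + 2) → F => (∑ i, x i, ∑ i, x i ^ 2)) (0, 0) =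
      Fintype.card F ^ (2 * k) := by
  set u := fun b => fiberCard (fun x : Fin (2 * k + 2) → F => (∑ i, x i, ∑ i, x i ^ 2)) (0, b)
  have hconv : addConv χ (fiberCard fun x : Fin (2 * k + 2) → F => ∑ i, x i ^ 2) 0 = 0 := by
    rw [funext (fiberCard_sumSq_even hF k), addConv_add_mul_right, addConv_centeredDelta,
      quadraticChar_sum_zero hF, MulChar.map_zero]
    ring
  rw [funext (fiberCard_sumSq_eq_addConv hF (m := 2 * k + 1) hn), addConv_add_mul_right,
    ← addConv_assoc, addConv_quadraticChar_self hF, addConv_mul_left, addConv_comm,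
    addConv_centeredDelta, sum_fiberCard_sum_sumSq_zero, quadraticChar_sum_zero hF] at hconv
  have hχn : χ ((2 * k + 2 : ℕ) : F) ≠ 0 := quadraticChar_eq_zero_iff.not.mpr hn
  have hχ1 : χ (-1) ≠ 0 := quadraticChar_eq_zero_iff.not.mpr (neg_ne_zero.mpr one_ne_zero)
  have hq : (Fintype.card F : ℤ) ≠ 0 := Nat.cast_ne_zero.mpr Fintype.card_ne_zero
  have hu : (Fintype.card F : ℤ) * u 0 - Fintype.card F * Fintype.card F ^ (2 * k) = 0 := by
    refine (mul_eq_zero.mp ?_).resolve_left (mul_ne_zero hχn hχ1)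
    linear_combination hconv
  exact mul_left_cancel₀ hq (sub_eq_zero.mp hu)

end FiniteField

theorem count_isotropic_nonzero_sum_even_char_not_dvd_general
    {F : Type*} [Field F] [Fintype F] [DecidableEq F] {q n : ℕ}
    (hcard : Fintype.card F = q)
    (hneven : Even n) (hp : ¬ ringChar F ∣ n) :
    (Set.ncard {x : Fin n → F | (∑ i, x i ^ 2) = 0 ∧ (∑ i, x i) ≠ 0} : ℤ)
      = (q : ℤ) ^ (n - 2) * (q - 1)
        + quadChar F ((-1 : F) ^ (n / 2)) * (q - 1) * (q : ℤ) ^ ((n - 2) / 2) := by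
  subst hcard
  have hF : ringChar F ≠ 2 := fun h => hp (h ▸ even_iff_two_dvd.mp hneven)
  obtain ⟨k, rfl⟩ : ∃ k, n = 2 * k + 2 := by
    obtain ⟨j, rfl⟩ := hneven
    have hj : j ≠ 0 := by rintro rfl; exact hp (dvd_zero _)
    exact ⟨j - 1, by omega⟩
  have hn : ((2 * k + 2 : ℕ) : F) ≠ 0 := fun h => hp ((ringChar.spec F _).mp h)
  rw [Set.ncard_eq_toFinset_card', Set.toFinset_ofPred,
    card_filter_eq_and_ne (fun x : Fin (2 * k + 2) → F => ∑ i, x i) (fun x => ∑ i, x i ^ 2),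
    fiberCard_sumSq_even hF, fiberCard_sum_sumSq_zero_zero hF k hn, quadChar_eq_quadraticChar,
    map_pow, show (2 * k + 2) / 2 = k + 1 by omega, show 2 * k + 2 - 2 = 2 * k by omega,
    show 2 * k / 2 = k by omega, centeredDelta, if_pos rfl]
  ring

theorem count_isotropic_nonzero_sum_even_char_not_dvd
    {F : Type*} [Field F] [Fintype F] [DecidableEq F] {q n : ℕ}
    (hcard : Fintype.card F = q) (hq : Odd q)
    (hneven : Even n) (hp : ¬ ringChar F ∣ n) :
    (Set.ncard {x : Fin n → F | (∑ i, x i ^ 2) = 0 ∧ (∑ i, x i) ≠ 0} : ℤ)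
      = (q : ℤ) ^ (n - 2) * (q - 1)
        + quadChar F ((-1 : F) ^ (n / 2)) * (q - 1) * (q : ℤ) ^ ((n - 2) / 2) :=
  count_isotropic_nonzero_sum_even_char_not_dvd_general hcard hneven hp
end

section
/- Let q be odd and let x ∈ F_q^n satisfy ⟨x,x⟩ = 0 and ⟨x,1⟩ ≠ 0 (1 the all-ones vector), and let U be an LCD code of dimension k−1 contained in x^⊥ ∩ ⟨x⟩^c-complement such that C = ⟨x⟩ ⊕ U with x ⊥ U. Fix a, b ∈ F_q with a ≠ 0, b ≠ 0, a + nb ≠ 0, and set M = aI + bJ. Then with generator matrix G having first row x and remaining rows a generator matrix G' of U, det(G M G^T) = b⟨x,1⟩² · a^{k−1} · det(G' G'^T) ≠ 0; hence C is M-LCD. -/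
/-! Write `𝟙` for the all-ones vector and `u = G 𝟙`. Since `J = 𝟙 𝟙ᵀ`, `G M Gᵀ = a G Gᵀ + b u uᵀ`.
As `x` is isotropic and orthogonal to the rows of `G'`, the first row and column of `G Gᵀ` vanish
and its lower block is `G' G'ᵀ`. Subtracting multiples of the first row (which is `b u₀ uᵀ`, with
`u₀ = ⟨x, 𝟙⟩ ≠ 0`) clears the rank-one part below it, and expanding along the first column leaves
`b u₀² · det (a G' G'ᵀ)`. -/

open Matrix

theorem Matrix.mul_smul_one_add_smul_allOnes_mul_transpose_s17 {R ι κ : Type*} [CommSemiring R]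
    [Fintype κ] [DecidableEq κ] (G : Matrix ι κ R) (a b : R) :
    G * (a • (1 : Matrix κ κ R) + b • of fun _ _ => (1 : R)) * Gᵀ =
      a • (G * Gᵀ) + vecMulVec (b • (G *ᵥ fun _ => 1)) (G *ᵥ fun _ => 1) := by
  have hJ : (of fun _ _ => (1 : R) : Matrix κ κ R) = vecMulVec (fun _ => 1) (fun _ => 1) := by
    ext; simp [vecMulVec_apply]
  rw [hJ, Matrix.mul_add, Matrix.add_mul, Matrix.mul_smul, Matrix.smul_mul, Matrix.mul_one,
    Matrix.mul_smul, Matrix.smul_mul, mul_vecMulVec, vecMulVec_mul, ← smul_vecMulVec,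
    vecMul_transpose]

theorem Matrix.det_eq_mul_det_submatrix_succ_of_column_zero {R : Type*} [CommRing R] {m : ℕ}
    (B : Matrix (Fin (m + 1)) (Fin (m + 1)) R) (h : ∀ i : Fin m, B i.succ 0 = 0) :
    B.det = B 0 0 * (B.submatrix Fin.succ Fin.succ).det := by
  rw [det_succ_column_zero, Fin.sum_univ_succ]
  simp [h]

theorem Matrix.det_add_vecMulVec_of_row_column_zero {K : Type*} [Field K] {m : ℕ}
    (A : Matrix (Fin (m + 1)) (Fin (m + 1)) K) (u v : Fin (m + 1) → K)
    (hrow : ∀ j, A 0 j = 0) (hcol : ∀ i : Fin m, A i.succ 0 = 0) (hu : u 0 ≠ 0) :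
    (A + vecMulVec u v).det = u 0 * v 0 * (A.submatrix Fin.succ Fin.succ).det := by
  set B := A.updateRow 0 (u 0 • v)
  have hB : (A + vecMulVec u v).det = B.det := by
    refine det_eq_of_forall_row_eq_smul_add_const (Fin.cons 0 fun i => u i.succ / u 0) 0 rfl ?_
    intro i j
    cases i using Fin.cases with
    | zero => simp [B, vecMulVec_apply, hrow]
    | succ i =>
      simp only [B, Matrix.add_apply, vecMulVec_apply, updateRow_ne (Fin.succ_ne_zero i),
        Fin.cons_succ, updateRow_self, Pi.smul_apply, smul_eq_mul, add_right_inj]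
      field_simp
  have hcorner : B 0 0 = u 0 * v 0 := by simp [B]
  have hminor : B.submatrix Fin.succ Fin.succ = A.submatrix Fin.succ Fin.succ := by
    ext i j
    simp [B, Fin.succ_ne_zero]
  rw [hB, det_eq_mul_det_submatrix_succ_of_column_zero B (by simp [B, Fin.succ_ne_zero, hcol]),
    hcorner, hminor]

theorem Matrix.of_cons_mulVec_eq_zero {R : Type*} [CommSemiring R] {n m : ℕ} {x : Fin n → R}
    {G' : Matrix (Fin m) (Fin n) R} (hxx : x ⬝ᵥ x = 0) (hxG' : G' *ᵥ x = 0) :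
    of (Fin.cons x fun i => G' i) *ᵥ x = 0 := by
  rw [← vecCons, cons_mulVec, hxx]
  exact (congrArg (vecCons 0) hxG').trans cons_zero_zero

theorem Matrix.mul_transpose_apply_eq_zero_of_mulVec_eq_zero {R ι κ : Type*} [CommSemiring R]
    [Fintype κ] {G : Matrix ι κ R} {x : κ → R} (hGx : G *ᵥ x = 0) {k : ι} (hk : G k = x) (i : ι) :
    (G * Gᵀ) i k = 0 ∧ (G * Gᵀ) k i = 0 := by
  have hGGT : ∀ j l, (G * Gᵀ) j l = G j ⬝ᵥ G l := fun _ _ => rfl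
  have hi : G i ⬝ᵥ x = 0 := congrFun hGx i
  rw [hGGT, hGGT, hk, dotProduct_comm x]
  exact ⟨hi, hi⟩

theorem hull_dim_one_code_is_M_LCD_general {F : Type*} [Field F] {n m : ℕ}
    (x : Fin n → F) (hxx : x ⬝ᵥ x = 0) (hx1 : x ⬝ᵥ (fun _ => (1 : F)) ≠ 0)
    (G' : Matrix (Fin m) (Fin n) F)
    (hU : (G' * G'ᵀ).det ≠ 0)
    (hxG' : G' *ᵥ x = 0)
    (a b : F) (ha : a ≠ 0) (hb : b ≠ 0)
    (M : Matrix (Fin n) (Fin n) F)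
    (hM : M = a • (1 : Matrix (Fin n) (Fin n) F) + b • (Matrix.of fun _ _ => (1 : F)))
    (G : Matrix (Fin (m + 1)) (Fin n) F)
    (hG : G = Matrix.of (Fin.cons x fun i => G' i)) :
    (G * M * Gᵀ).det = b * (x ⬝ᵥ (fun _ => (1 : F))) ^ 2 * a ^ m * (G' * G'ᵀ).det ∧
      (G * M * Gᵀ).det ≠ 0 := by
  have hGx : G *ᵥ x = 0 := hG ▸ of_cons_mulVec_eq_zero hxx hxG'
  have hG0 : G 0 = x := hG ▸ rfl
  have hminor : (a • (G * Gᵀ)).submatrix Fin.succ Fin.succ = a • (G' * G'ᵀ) := by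
    subst hG; ext; simp [mul_apply]
  have hdet : (G * M * Gᵀ).det = b * (x ⬝ᵥ (fun _ => (1 : F))) ^ 2 * a ^ m * (G' * G'ᵀ).det := by
    rw [hM, mul_smul_one_add_smul_allOnes_mul_transpose_s17,
      det_add_vecMulVec_of_row_column_zero _ _ _
        (fun j => by simp [(mul_transpose_apply_eq_zero_of_mulVec_eq_zero hGx hG0 j).2])
        (fun i => by simp [(mul_transpose_apply_eq_zero_of_mulVec_eq_zero hGx hG0 i.succ).1])
        (by simp [mulVec, hG0, hb, hx1]),
      hminor, det_smul, Fintype.card_fin]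
    simp only [Pi.smul_apply, smul_eq_mul, mulVec, hG0]
    ring
  refine ⟨hdet, ?_⟩
  rw [hdet]
  exact mul_ne_zero (mul_ne_zero (mul_ne_zero hb (pow_ne_zero 2 hx1)) (pow_ne_zero m ha)) hU

theorem hull_dim_one_code_is_M_LCD {F : Type*} [Field F] [Fintype F] {n m : ℕ}
    (hq : Odd (Fintype.card F))
    (x : Fin n → F) (hxx : x ⬝ᵥ x = 0) (hx1 : x ⬝ᵥ (fun _ => (1 : F)) ≠ 0)
    (G' : Matrix (Fin m) (Fin n) F)
    (hU : (G' * G'ᵀ).det ≠ 0)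
    (hxG' : G' *ᵥ x = 0)
    (a b : F) (ha : a ≠ 0) (hb : b ≠ 0) (hab : a + (n : F) * b ≠ 0)
    (M : Matrix (Fin n) (Fin n) F)
    (hM : M = a • (1 : Matrix (Fin n) (Fin n) F) + b • (Matrix.of fun _ _ => (1 : F)))
    (G : Matrix (Fin (m + 1)) (Fin n) F)
    (hG : G = Matrix.of (Fin.cons x fun i => G' i)) :
    (G * M * Gᵀ).det = b * (x ⬝ᵥ (fun _ => (1 : F))) ^ 2 * a ^ m * (G' * G'ᵀ).det ∧
      (G * M * Gᵀ).det ≠ 0 :=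
  hull_dim_one_code_is_M_LCD_general x hxx hx1 G' hU hxG' a b ha hb M hM G hG
end

section
/- Let q be odd and let C be an [n,k]_q code with dim Hull(C) ≥ 2 (hull with respect to the standard inner product). Then for every invertible matrix of the form M = aI + bJ, the code C is not M-LCD; that is, Hull_M(C) ≠ {0}. -/
/-!
For `y` in the Euclidean hull with `∑ i, y i = 0` we have `J y = 0`, hence
`x M yᵀ = a (x ⬝ᵥ y) = 0` for every `x ∈ C`, so `y` lies in the `M`-hull. These `y` form the
kernel of a linear functional on the Euclidean hull, which is nonzero once the hull has
dimension at least `2`.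
-/

open Matrix

theorem Submodule.exists_ne_zero_mem_ker_of_two_le_finrank {K V : Type*} [Field K]
    [AddCommGroup V] [Module K V] {p : Submodule K V} [FiniteDimensional K p]
    (hp : 2 ≤ Module.finrank K p) (f : V →ₗ[K] K) : ∃ y ∈ p, f y = 0 ∧ y ≠ 0 := by
  have hker : LinearMap.ker (f.domRestrict p) ≠ ⊥ :=
    LinearMap.ker_ne_bot_of_finrank_lt <| by rw [Module.finrank_self]; omega
  obtain ⟨y, hy, hy0⟩ := Submodule.exists_mem_ne_zero_of_ne_bot hker
  exact ⟨y, y.2, hy, fun h => hy0 (Subtype.ext h)⟩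

theorem allOnes_mulVec {κ ι R : Type*} [Fintype ι] [NonAssocSemiring R] (y : ι → R) :
    (Matrix.of fun (_ : κ) (_ : ι) => (1 : R)) *ᵥ y = fun _ => ∑ i, y i := by
  funext j
  simp [Matrix.mulVec, dotProduct]

section

variable {F : Type*} [Field F] {n : ℕ} {C : Submodule F (Fin n → F)}

theorem mem_Mdual_one_iff {y : Fin n → F} : y ∈ Mdual 1 C ↔ ∀ x ∈ C, x ⬝ᵥ y = 0 := by
  simp only [Mdual, one_mulVec]
  rfl

theorem mem_Mdual_smul_one_add_smul_allOnes (a b : F) {y : Fin n → F} (hy : y ∈ Mdual 1 C)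
    (hsum : ∑ i, y i = 0) :
    y ∈ Mdual (a • (1 : Matrix (Fin n) (Fin n) F) + b • Matrix.of fun _ _ => (1 : F)) C := by
  intro x hx
  rw [add_mulVec, smul_mulVec, smul_mulVec, one_mulVec, allOnes_mulVec, hsum,
    dotProduct_add, dotProduct_smul, dotProduct_smul, mem_Mdual_one_iff.1 hy x hx]
  simp [dotProduct]

end

theorem hull_dim_ge_two_not_M_LCD_general {F : Type*} [Field F] {n : ℕ}
    (C : Submodule F (Fin n → F))
    (hhull : 2 ≤ Module.finrank F ↥(C ⊓ Mdual 1 C))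
    (a b : F) (M : Matrix (Fin n) (Fin n) F)
    (hM : M = a • (1 : Matrix (Fin n) (Fin n) F) + b • (Matrix.of fun _ _ => (1 : F))) :
    C ⊓ Mdual M C ≠ ⊥ := by
  obtain ⟨y, ⟨hyC, hyHull⟩, hsum, hy0⟩ :=
    Submodule.exists_ne_zero_mem_ker_of_two_le_finrank hhull (∑ i, LinearMap.proj i)
  rw [LinearMap.sum_apply] at hsum
  have hyM : y ∈ C ⊓ Mdual M C := ⟨hyC, hM ▸ mem_Mdual_smul_one_add_smul_allOnes a b hyHull hsum⟩
  exact fun hbot => hy0 (by simpa [hbot] using hyM)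

theorem hull_dim_ge_two_not_M_LCD {F : Type*} [Field F] [Fintype F] {n : ℕ}
    (hq : Odd (Fintype.card F))
    (C : Submodule F (Fin n → F))
    (hhull : 2 ≤ Module.finrank F ↥(C ⊓ Mdual 1 C))
    (a b : F) (M : Matrix (Fin n) (Fin n) F)
    (hM : M = a • (1 : Matrix (Fin n) (Fin n) F) + b • (Matrix.of fun _ _ => (1 : F)))
    (hMinv : IsUnit M.det) :
    C ⊓ Mdual M C ≠ ⊥ :=
  hull_dim_ge_two_not_M_LCD_general C hhull a b M hM
end

section
/- Let q be odd, P a homomorphism setting: suppose λ: S_n → F_q* is a group homomorphism and M is a nonzero symmetric n×n matrix over F_q with n ≥ 3 such that P_π M P_π^T = λ(π) M for every permutation π ∈ S_n. Then λ(π) = 1 for all π, and consequently M = aI + bJ for some a, b ∈ F_q. -/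
open Matrix
open Equiv (Perm)

/-!
All transpositions are conjugate in `Sₙ` and `Fˣ` is abelian, so `λ` takes one value `ε` with
`ε² = 1` on every transposition. If `ε = -1`, a transposition swapping `k, l` negates the entry
`M k l = M l k`, and (as `n ≥ 3`) a transposition fixing `k` negates `M k k`; in odd
characteristic all entries vanish. Hence `λ` is trivial on the generating transpositions, so `M`
is invariant under the 2-transitive action of `Sₙ` and is constant on and off the diagonal.
-/

section

variable {α R : Type*} [DecidableEq α]

theorem Equiv.Perm.permMatrix_mul_mul_transpose_permMatrix [Fintype α] [NonAssocSemiring R]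
    (σ : Perm α) (M : Matrix α α R) :
    σ.permMatrix R * M * (σ.permMatrix R)ᵀ = M.submatrix σ σ := by
  rw [transpose_permMatrix, Perm.permMatrix, Perm.permMatrix, PEquiv.toMatrix_toPEquiv_mul,
    PEquiv.mul_toMatrix_toPEquiv]
  rfl

theorem MonoidHom.map_swap_eq_map_swap {G : Type*} [CommMonoid G] (χ : Perm α →* G)
    {a b c d : α} (hab : a ≠ b) (hcd : c ≠ d) : χ (Equiv.swap a b) = χ (Equiv.swap c d) :=
  isConj_iff_eq.mp (χ.map_isConj (Equiv.Perm.isConj_swap hab hcd))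

theorem Matrix.eq_zero_of_forall_submatrix_swap_eq_neg [Fintype α] [Ring R] [IsDomain R]
    (hα : 3 ≤ Fintype.card α) (hR : ringChar R ≠ 2) {M : Matrix α α R} (hM : M.IsSymm)
    (h : ∀ a b, a ≠ b → M.submatrix (Equiv.swap a b) (Equiv.swap a b) = -M) : M = 0 := by
  have h_entry : ∀ a b k l, a ≠ b → M (Equiv.swap a b k) (Equiv.swap a b l) = -M k l :=
    fun a b k l hab => congr_fun₂ (h a b hab) k l
  ext k l
  rw [zero_apply, ← Ring.eq_self_iff_eq_zero_of_char_ne_two hR]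
  obtain rfl | hkl := eq_or_ne k l
  · obtain ⟨p, hp, q, hq, hpq⟩ := Finset.one_lt_card.mp <| by
      rw [Finset.card_erase_of_mem (Finset.mem_univ k), Finset.card_univ]
      omega
    rw [Finset.mem_erase] at hp hq
    simpa [Equiv.swap_apply_of_ne_of_ne hp.1.symm hq.1.symm] using (h_entry p q k k hpq).symm
  · simpa [hM.apply k l] using (h_entry k l k l hkl).symm

theorem MonoidHom.eq_one_of_submatrix_eq_smul [Fintype α] [CommRing R] [IsDomain R]
    (hα : 3 ≤ Fintype.card α) (hR : ringChar R ≠ 2) (χ : Perm α →* Rˣ)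
    {M : Matrix α α R} (hM : M.IsSymm) (hM0 : M ≠ 0)
    (h : ∀ σ : Perm α, M.submatrix σ σ = (χ σ : R) • M) : χ = 1 := by
  obtain ⟨a, b, hab⟩ := Fintype.exists_pair_of_one_lt_card (α := α) (by omega)
  have hsq : (χ (Equiv.swap a b) : R) * χ (Equiv.swap a b) = 1 := by
    rw [← Units.val_mul, ← map_mul, Equiv.swap_mul_self, map_one, Units.val_one]
  have hone : χ (Equiv.swap a b) = 1 := by
    refine Units.val_eq_one.mp ((mul_self_eq_one_iff.mp hsq).resolve_right fun hneg => hM0 ?_)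
    refine M.eq_zero_of_forall_submatrix_swap_eq_neg hα hR hM fun c d hcd => ?_
    rw [h, χ.map_swap_eq_map_swap hcd hab, hneg, neg_one_smul]
  refine MonoidHom.eq_of_eqOn_dense Equiv.Perm.closure_isSwap ?_
  rintro _ ⟨c, d, hcd, rfl⟩
  rw [χ.map_swap_eq_map_swap hcd hab, hone, MonoidHom.one_apply]

theorem Matrix.eq_smul_one_add_smul_of_forall_submatrix_eq [Ring R] {M : Matrix α α R}
    (h : ∀ σ : Perm α, M.submatrix σ σ = M) {i j : α} (hij : i ≠ j) :
    M = (M i i - M i j) • (1 : Matrix α α R) + M i j • of fun _ _ => 1 := by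
  have hdiag : ∀ k, M k k = M i i := fun k => by
    simpa using congr_fun₂ (h (Equiv.swap i k)) i i
  have hoff : ∀ k l, k ≠ l → M k l = M i j := fun k l hkl => by
    obtain ⟨σ, hσi, hσj⟩ :=
      MulAction.is_two_pretransitive_iff.mp (Equiv.Perm.isMultiplyPretransitive α 2) hij hkl
    rw [Equiv.Perm.smul_def] at hσi hσj
    simpa [hσi, hσj] using congr_fun₂ (h σ) i j
  ext k l
  obtain rfl | hkl := eq_or_ne k l
  · simp [hdiag]
  · simp [one_apply_ne hkl, hoff k l hkl]

end

theorem perm_scaling_homomorphism_trivial {F : Type*} [Field F] [Fintype F] {n : ℕ}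
    (hq : Odd (Fintype.card F)) (hn : 3 ≤ n)
    (lam : Equiv.Perm (Fin n) →* Fˣ)
    (M : Matrix (Fin n) (Fin n) F) (hMs : Mᵀ = M) (hM0 : M ≠ 0)
    (hscale : ∀ π : Equiv.Perm (Fin n),
      (π.permMatrix F) * M * (π.permMatrix F)ᵀ = ((lam π : F)) • M) :
    (∀ π : Equiv.Perm (Fin n), lam π = 1) ∧
      ∃ a b : F, M = a • (1 : Matrix (Fin n) (Fin n) F) + b • (Matrix.of fun _ _ => (1 : F)) := by
  have hF : ringChar F ≠ 2 := fun h => by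
    have := FiniteField.even_card_iff_char_two.mp h
    rw [Nat.odd_iff] at hq
    omega
  have hsub : ∀ σ : Perm (Fin n), M.submatrix σ σ = (lam σ : F) • M := fun σ => by
    rw [← σ.permMatrix_mul_mul_transpose_permMatrix, hscale]
  have hlam : lam = 1 :=
    lam.eq_one_of_submatrix_eq_smul (by simpa using hn) hF hMs hM0 hsub
  have hinv : ∀ σ : Perm (Fin n), M.submatrix σ σ = M := fun σ => by
    rw [hsub, hlam, MonoidHom.one_apply, Units.val_one, one_smul]
  refine ⟨fun π => by rw [hlam, MonoidHom.one_apply], _, _,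
    M.eq_smul_one_add_smul_of_forall_submatrix_eq hinv
      (i := ⟨0, by omega⟩) (j := ⟨1, by omega⟩) (by simp [Fin.ext_iff])⟩
end
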